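/- Let D be an integral domain with quotient field K. For each semistar operation ⋆ of D, there exists a strictly increasing infinite sequence ★₁ ⪇ ★₂ ⪇ ★₃ ⪇ ⋯ of semistar operations of D[X], each of which is a strict extension of ⋆ to D[X]. -/
import Mathlib


/- Preliminaries: semistar operations on an integral domain `R` with quotient field `F`
(submodules of `F` over `R`), polynomial extension of semistar operations from `D`
to `D[X]` (viewed inside the quotient field `K(X) = RatFunc K` of `D[X]`). -/

open Polynomial Pointwise

set_option synthInstance.maxHeartbeats 1000000
set_option maxHeartbeats 1000000

open scoped Classical

noncomputable section

section Generic

variable (R F : Type*) [CommRing R] [Field F] [Algebra R F]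

/-- `o` is a semistar operation of `R` (on the nonzero `R`-submodules of the
quotient field `F`). -/
def IsSemistarOp (o : Submodule R F → Submodule R F) : Prop :=
  (∀ x : F, x ≠ 0 → ∀ E : Submodule R F, E ≠ ⊥ → o (x • E) = x • o E) ∧
  (∀ E G : Submodule R F, E ≠ ⊥ → G ≠ ⊥ → E ≤ G → o E ≤ o G) ∧
  (∀ E : Submodule R F, E ≠ ⊥ → E ≤ o E) ∧
  (∀ E : Submodule R F, E ≠ ⊥ → o (o E) = o E)

/-- The finite-type operation `⋆_f` associated to `⋆`:
`E^{⋆_f} = ⋃ { G^⋆ : G nonzero finitely generated, G ⊆ E }`. -/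
def finTypeFun (o : Submodule R F → Submodule R F) : Submodule R F → Submodule R F :=
  fun E => ⨆ (G : Submodule R F) (_ : G ≠ ⊥) (_ : G.FG) (_ : G ≤ E), o G

/-- `⋆` is of finite type, i.e. `⋆ = ⋆_f`. -/
def IsFiniteTypeFun (o : Submodule R F → Submodule R F) : Prop :=
  ∀ E : Submodule R F, E ≠ ⊥ → o E = finTypeFun R F o E

/-- `⋆` is stable: `(E ∩ G)^⋆ = E^⋆ ∩ G^⋆`. -/
def IsStableFun (o : Submodule R F → Submodule R F) : Prop :=
  ∀ E G : Submodule R F, E ≠ ⊥ → G ≠ ⊥ → o (E ⊓ G) = o E ⊓ o G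

/-- An ideal of `R` viewed as an `R`-submodule of `F`. -/
def idealSub (J : Ideal R) : Submodule R F := Submodule.map (Algebra.linearMap R F) J

/-- `(E : J) = { x ∈ F : xJ ⊆ E }` for an ideal `J` of `R`. -/
def colonIdeal (E : Submodule R F) (J : Ideal R) : Submodule R F where
  carrier := { x : F | ∀ a ∈ J, a • x ∈ E }
  add_mem' := fun {x y} hx hy a ha => by
    simpa [smul_add] using E.add_mem (hx a ha) (hy a ha)
  zero_mem' := fun a _ => by simpa using E.zero_mem
  smul_mem' := fun r x hx a ha => by
    rw [← mul_smul, mul_comm, mul_smul]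
    exact E.smul_mem r (hx a ha)

/-- The stable finite-type operation `tilde ⋆` associated to `⋆`:
`E^{tilde ⋆} = ⋃ { (E : J) : J nonzero finitely generated integral ideal with J^⋆ = R^⋆ }`. -/
def tildeFun (o : Submodule R F → Submodule R F) : Submodule R F → Submodule R F :=
  fun E => ⨆ (J : Ideal R) (_ : J ≠ ⊥) (_ : J.FG)
    (_ : o (idealSub R F J) = o (1 : Submodule R F)), colonIdeal R F E J

/-- The `v`-operation: `E^v = (R : (R : E))` for `E` a nonzero fractional ideal,
and `E^v = F` otherwise. -/
def vFun : Submodule R F → Submodule R F := fun E =>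
  if ∃ d : R, d ≠ 0 ∧ ∀ x ∈ E, d • x ∈ (1 : Submodule R F) then
    (1 : Submodule R F) / ((1 : Submodule R F) / E)
  else ⊤

/-- The `eab` operation `⋆_a` associated to `⋆`. -/
def aFun (o : Submodule R F → Submodule R F) : Submodule R F → Submodule R F := fun E =>
  ⨆ (G : Submodule R F) (_ : G ≠ ⊥) (_ : G.FG) (_ : G ≤ E),
    ⨆ (H : Submodule R F) (_ : H ≠ ⊥) (_ : H.FG), o (G * H) / o H

/-- `I` is a quasi-`⋆`-ideal: a nonzero integral ideal with `I^⋆ ∩ R = I`. -/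
def isQuasiIdealFun (o : Submodule R F → Submodule R F) (I : Ideal R) : Prop :=
  I ≠ ⊥ ∧ (o (idealSub R F I)).comap (Algebra.linearMap R F) = I

/-- `I` is a quasi-`⋆`-maximal ideal: maximal among proper quasi-`⋆`-ideals. -/
def isQuasiMaximalFun (o : Submodule R F → Submodule R F) (I : Ideal R) : Prop :=
  isQuasiIdealFun R F o I ∧ I ≠ ⊤ ∧
    ∀ J : Ideal R, isQuasiIdealFun R F o J → J ≠ ⊤ → I ≤ J → I = J

/-- The `v`-operation relative to an overring `R'` (an `R`-submodule of `F`):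
`B ↦ (R' : (R' : B))` for `B` a nonzero fractional ideal of `R'`, `F` otherwise. -/
def vRelFun (R' B : Submodule R F) : Submodule R F :=
  if ∃ z ∈ R', z ≠ 0 ∧ ∀ x ∈ B, z * x ∈ R' then R' / (R' / B) else ⊤

/-- The `t`-operation relative to an overring `R'`: finite-type operation associated to
the `v`-operation of `R'` (the union being over nonzero finitely generated
`R'`-submodules contained in `B`). -/
def tRelFun (R' B : Submodule R F) : Submodule R F :=
  ⨆ (G : Submodule R F) (_ : G ≠ ⊥)
    (_ : ∃ S : Finset F, G = R' * Submodule.span R (S : Set F)) (_ : G ≤ B),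
    vRelFun R F R' G

end Generic

section Poly

variable (D K : Type*) [CommRing D] [IsDomain D] [Field K] [Algebra D K] [IsFractionRing D K]

/-- The canonical ring homomorphism `D[X] → K(X)`. -/
def polyToRF : Polynomial D →+* RatFunc K :=
  (algebraMap (Polynomial K) (RatFunc K)).comp (Polynomial.mapRingHom (algebraMap D K))

/-- `K(X)` is an algebra over `D[X]`; in fact it is the quotient field of `D[X]`. -/
instance (priority := 100) : Algebra (Polynomial D) (RatFunc K) := (polyToRF D K).toAlgebra

/-- For a `D`-submodule `E` of `K`, the `D[X]`-submodule `E[X]` of `K(X)`: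
polynomials all of whose coefficients lie in `E`. -/
def polyExt (E : Submodule D K) : Submodule (Polynomial D) (RatFunc K) where
  carrier := { f : RatFunc K | ∃ p : Polynomial K, (∀ n, p.coeff n ∈ E) ∧
      f = algebraMap (Polynomial K) (RatFunc K) p }
  add_mem' := by
    rintro f g ⟨p, hp, rfl⟩ ⟨q, hq, rfl⟩
    exact ⟨p + q, fun n => by simpa using E.add_mem (hp n) (hq n), by simp⟩
  zero_mem' := ⟨0, fun n => by simpa using E.zero_mem, by simp⟩
  smul_mem' := by
    rintro c f ⟨p, hp, rfl⟩
    refine ⟨Polynomial.map (algebraMap D K) c * p, fun n => ?_, ?_⟩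
    · rw [Polynomial.coeff_mul]
      refine Submodule.sum_mem E fun ij _ => ?_
      rw [Polynomial.coeff_map, ← Algebra.smul_def]
      exact E.smul_mem _ (hp ij.2)
    · rw [Algebra.smul_def, RingHom.algebraMap_toAlgebra, map_mul]
      unfold polyToRF
      simp

/-- The contraction `B ∩ K` of a `D[X]`-submodule `B` of `K(X)` to a `D`-submodule of `K`. -/
def contractToBase (B : Submodule (Polynomial D) (RatFunc K)) : Submodule D K where
  carrier := { x : K | algebraMap K (RatFunc K) x ∈ B }
  add_mem' := fun {x y} hx hy => by
    simpa [Set.mem_setOf_eq, map_add] using B.add_mem hx hy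
  zero_mem' := by simpa using B.zero_mem
  smul_mem' := fun d x hx => by
    have h : algebraMap K (RatFunc K) (d • x)
        = (Polynomial.C d : Polynomial D) • (algebraMap K (RatFunc K) x) := by
      rw [Algebra.smul_def d x, map_mul, Algebra.smul_def, RingHom.algebraMap_toAlgebra]
      unfold polyToRF
      simp only [RingHom.coe_comp, Function.comp_apply, Polynomial.coe_mapRingHom,
        Polynomial.map_C, RatFunc.algebraMap_C, RatFunc.algebraMap_eq_C]
    show algebraMap K (RatFunc K) (d • x) ∈ B
    rw [h]
    exact B.smul_mem (Polynomial.C d) hx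

/-- The content `c_D(S)`: the `D`-submodule of `K` generated by the coefficients of all
polynomials belonging to `S`. -/
def contentOf (S : Set (RatFunc K)) : Submodule D K :=
  Submodule.span D { x : K | ∃ p : Polynomial K,
    algebraMap (Polynomial K) (RatFunc K) p ∈ S ∧ ∃ n, p.coeff n = x }

/-- The semistar operation `▲^⋆_T` of `D[X]` associated to a semistar operation `⋆` of `D`
and an overring `T` of `D`:
`A ↦ ⋂ { z⁻¹ (c_D(zA))^⋆[X] : z ∈ (T[X] : A), z ≠ 0 }` if `(T[X] : A) ≠ 0`, else `A ↦ K(X)`. -/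
def bigTriT (o : Submodule D K → Submodule D K) (T : Subalgebra D K) :
    Submodule (Polynomial D) (RatFunc K) → Submodule (Polynomial D) (RatFunc K) := fun A =>
  if ∃ z : RatFunc K, z ≠ 0 ∧ ∀ a ∈ A, z * a ∈ polyExt D K (Subalgebra.toSubmodule T) then
    ⨅ (z : RatFunc K) (_ : z ≠ 0) (_ : ∀ a ∈ A, z * a ∈ polyExt D K (Subalgebra.toSubmodule T)),
      z⁻¹ • polyExt D K (o (contentOf D K (z • (A : Set (RatFunc K)))))
  else ⊤

/-- `▲^⋆ := ▲^⋆_K`, the largest strict extension of `⋆` to `D[X]`. -/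
def bigTri (o : Submodule D K → Submodule D K) :
    Submodule (Polynomial D) (RatFunc K) → Submodule (Polynomial D) (RatFunc K) :=
  bigTriT D K o ⊤

/-- `b` is an extension of `⋆` to `D[X]` : `E^⋆ = (E[X])^b ∩ K`. -/
def IsExtensionFun (o : Submodule D K → Submodule D K)
    (b : Submodule (Polynomial D) (RatFunc K) → Submodule (Polynomial D) (RatFunc K)) : Prop :=
  ∀ E : Submodule D K, E ≠ ⊥ → o E = contractToBase D K (b (polyExt D K E))

/-- `b` is a strict extension of `⋆` to `D[X]` : `(E[X])^b = E^⋆[X]`. -/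
def IsStrictExtensionFun (o : Submodule D K → Submodule D K)
    (b : Submodule (Polynomial D) (RatFunc K) → Submodule (Polynomial D) (RatFunc K)) : Prop :=
  ∀ E : Submodule D K, E ≠ ⊥ → b (polyExt D K E) = polyExt D K (o E)

/-- `⋏^⋆ : A ↦ ⋂ { A^★ : ★ a semistar operation of D[X] extending ⋆ }`. -/
def curlyFun (o : Submodule D K → Submodule D K) :
    Submodule (Polynomial D) (RatFunc K) → Submodule (Polynomial D) (RatFunc K) := fun A =>
  ⨅ (b : Submodule (Polynomial D) (RatFunc K) → Submodule (Polynomial D) (RatFunc K))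
    (_ : IsSemistarOp (Polynomial D) (RatFunc K) b) (_ : IsExtensionFun D K o b), b A

/-- The localization `D_Q` of `D` at a prime ideal `Q`, as a `D`-submodule of `K`. -/
def locSub (Q : Ideal D) : Submodule D K :=
  Submodule.span D { x : K | ∃ s : D, s ∉ Q ∧ s • x ∈ (1 : Submodule D K) }

/-- The content of an ideal `I` of `D[X]`: the `D`-submodule of `K` generated by the
coefficients of the polynomials in `I`. -/
def contentOfIdeal (I : Ideal (Polynomial D)) : Submodule D K :=
  Submodule.span D { x : K | ∃ p ∈ I, ∃ n, algebraMap D K (Polynomial.coeff p n) = x }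

/-- The Nagata ring `D_Q(X)`, as a subset of `K(X)`: fractions `f/g` with
`f, g ∈ D_Q[X]` and the coefficients of `g` generating the unit ideal of `D_Q`. -/
def nagataSet (Q : Ideal D) : Set (RatFunc K) :=
  { u : RatFunc K | ∃ g : Polynomial K, (∀ n, g.coeff n ∈ locSub D K Q) ∧
      locSub D K Q * Submodule.span D { x : K | ∃ n, g.coeff n = x } = locSub D K Q ∧
      u * algebraMap (Polynomial K) (RatFunc K) g ∈ polyExt D K (locSub D K Q) }

end Poly

/- ==================== Auxiliary development for the theorem ==================== -/

lemma Submodule.mem_psmul {α R M : Type*} [Monoid α] [Semiring R] [AddCommMonoid M]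
    [Module R M] [DistribMulAction α M] [SMulCommClass α R M]
    {a : α} {S : Submodule R M} {m : M} : m ∈ a • S ↔ ∃ s ∈ S, a • s = m :=
  Submodule.mem_map

section GseqSec
variable (K : Type*) [Field K]

/-- auxiliary pairs `(gₙ, g₀⋯gₙ)` of a pairwise coprime sequence of nonconstant polys. -/
def gseqP : ℕ → Polynomial K × Polynomial K
  | 0 => (Polynomial.X, Polynomial.X)
  | n + 1 => ((gseqP n).2 + 1, (gseqP n).2 * ((gseqP n).2 + 1))

def gseq (n : ℕ) : Polynomial K := (gseqP K n).1

lemma gseq_deg (n : ℕ) : 1 ≤ (gseq K n).natDegree ∧ 1 ≤ (gseqP K n).2.natDegree := by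
  induction n with
  | zero => simp [gseq, gseqP]
  | succ n ih =>
    have h1 : 1 ≤ (gseq K (n+1)).natDegree := by
      show 1 ≤ ((gseqP K n).2 + 1).natDegree
      rw [← Polynomial.C_1, Polynomial.natDegree_add_C]
      exact ih.2
    refine ⟨h1, ?_⟩
    show 1 ≤ ((gseqP K n).2 * ((gseqP K n).2 + 1)).natDegree
    have hne1 : (gseqP K n).2 ≠ 0 := by
      intro h; simpa [h] using ih.2
    have hne2 : (gseqP K n).2 + 1 ≠ 0 := by
      intro h
      have : ((gseqP K n).2 + 1).natDegree = 0 := by rw [h]; simp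
      rw [← Polynomial.C_1, Polynomial.natDegree_add_C] at this
      omega
    rw [Polynomial.natDegree_mul hne1 hne2]
    omega

lemma gseq_ne_zero (n : ℕ) : gseq K n ≠ 0 := by
  intro h
  have := (gseq_deg K n).1
  simp [h] at this

lemma gseq_not_unit (n : ℕ) : ¬ IsUnit (gseq K n) := by
  intro h
  have := Polynomial.natDegree_eq_zero_of_isUnit h
  have := (gseq_deg K n).1
  omega

lemma gseq_dvd_snd {i m : ℕ} (h : i ≤ m) : gseq K i ∣ (gseqP K m).2 := by
  induction m with
  | zero =>
    interval_cases i
    exact dvd_refl _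
  | succ m ih =>
    rcases Nat.le_succ_iff.mp h with h' | h'
    · show gseq K i ∣ (gseqP K m).2 * ((gseqP K m).2 + 1)
      exact (ih h').mul_right _
    · subst h'
      show gseq K (m+1) ∣ (gseqP K m).2 * ((gseqP K m).2 + 1)
      exact Dvd.intro_left _ rfl

lemma gseq_coprime_lt {i j : ℕ} (h : i < j) : IsCoprime (gseq K i) (gseq K j) := by
  obtain ⟨m, rfl⟩ : ∃ m, j = m + 1 := ⟨j - 1, by omega⟩
  obtain ⟨c, hc⟩ := gseq_dvd_snd K (show i ≤ m by omega)
  refine ⟨-c, 1, ?_⟩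
  have : gseq K (m+1) = (gseqP K m).2 + 1 := rfl
  rw [this, hc]
  ring

lemma gseq_coprime {i j : ℕ} (h : i ≠ j) : IsCoprime (gseq K i) (gseq K j) := by
  rcases lt_or_gt_of_ne h with h' | h'
  · exact gseq_coprime_lt K h'
  · exact (gseq_coprime_lt K h').symm

end GseqSec

section OpFSec

variable (D K : Type*) [CommRing D] [IsDomain D] [Field K] [Algebra D K] [IsFractionRing D K]

/-- `{ f | z * f ∈ M }`, as a `D[X]`-submodule of `K(X)`. -/
def preMulM (z : RatFunc K) (M : Submodule (Polynomial D) (RatFunc K)) :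
    Submodule (Polynomial D) (RatFunc K) where
  carrier := { f | z * f ∈ M }
  add_mem' := fun {a b} ha hb => by
    simp only [Set.mem_setOf_eq, mul_add] at *
    exact M.add_mem ha hb
  zero_mem' := by simp
  smul_mem' := fun c f hf => by
    simp only [Set.mem_setOf_eq] at *
    rw [Algebra.smul_def, mul_left_comm, ← Algebra.smul_def]
    exact M.smul_mem c hf

@[simp] lemma mem_preMulM {z : RatFunc K} {M : Submodule (Polynomial D) (RatFunc K)}
    {f : RatFunc K} : f ∈ preMulM D K z M ↔ z * f ∈ M := Iff.rfl

lemma mem_polyExt {E : Submodule D K} {f : RatFunc K} :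
    f ∈ polyExt D K E ↔ ∃ p : Polynomial K, (∀ n, p.coeff n ∈ E) ∧
      f = algebraMap (Polynomial K) (RatFunc K) p := Iff.rfl

lemma polyExt_mono {E F : Submodule D K} (h : E ≤ F) : polyExt D K E ≤ polyExt D K F := by
  rintro f ⟨p, hp, rfl⟩
  exact ⟨p, fun n => h (hp n), rfl⟩

lemma algC_mem_polyExt {E : Submodule D K} {e : K} (he : e ∈ E) :
    algebraMap (Polynomial K) (RatFunc K) (Polynomial.C e) ∈ polyExt D K E := by
  refine ⟨Polynomial.C e, fun n => ?_, rfl⟩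
  rw [Polynomial.coeff_C]
  split <;> simp [he]

/-- `K[X]` viewed as `D[X]`-submodule of `K(X)`. -/
def Kpoly : Submodule (Polynomial D) (RatFunc K) := polyExt D K ⊤

lemma mem_Kpoly {f : RatFunc K} :
    f ∈ Kpoly D K ↔ ∃ p : Polynomial K, f = algebraMap (Polynomial K) (RatFunc K) p := by
  constructor
  · rintro ⟨p, _, rfl⟩; exact ⟨p, rfl⟩
  · rintro ⟨p, rfl⟩; exact ⟨p, fun n => trivial, rfl⟩

/-- `K[X][1/g]` as a `D[X]`-submodule of `K(X)`. -/
def Jm (g : Polynomial K) : Submodule (Polynomial D) (RatFunc K) where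
  carrier := { f | ∃ k : ℕ,
      (algebraMap (Polynomial K) (RatFunc K) g) ^ k * f ∈ Kpoly D K }
  add_mem' := by
    rintro a b ⟨k, hk⟩ ⟨l, hl⟩
    refine ⟨k + l, ?_⟩
    rw [mem_Kpoly] at hk hl ⊢
    obtain ⟨p, hp⟩ := hk
    obtain ⟨q, hq⟩ := hl
    refine ⟨g ^ l * p + g ^ k * q, ?_⟩
    rw [mul_add]
    rw [map_add, map_mul, map_mul, map_pow, map_pow, ← hp, ← hq]
    ring
  zero_mem' := ⟨0, by simpa using (Kpoly D K).zero_mem⟩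
  smul_mem' := by
    rintro c f ⟨k, hk⟩
    refine ⟨k, ?_⟩
    rw [Algebra.smul_def, mul_left_comm, ← Algebra.smul_def]
    exact (Kpoly D K).smul_mem c hk

lemma mem_Jm {g : Polynomial K} {f : RatFunc K} :
    f ∈ Jm D K g ↔ ∃ k : ℕ,
      (algebraMap (Polynomial K) (RatFunc K) g) ^ k * f ∈ Kpoly D K := Iff.rfl

variable (star : Submodule D K → Submodule D K) (g : ℕ → Polynomial K)

/-- The `n`-th member of our strictly increasing sequence of strict extensions. -/
def opF (n : ℕ) (A : Submodule (Polynomial D) (RatFunc K)) :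
    Submodule (Polynomial D) (RatFunc K) :=
  (⨅ (z : RatFunc K) (_ : z ≠ 0) (E : Submodule D K) (_ : E ≠ ⊥)
      (_ : ∀ b ∈ A, z * b ∈ polyExt D K E), preMulM D K z (polyExt D K (star E))) ⊓
  ⨅ (i : ℕ) (_ : n ≤ i) (z : RatFunc K) (_ : z ≠ 0)
      (_ : ∀ b ∈ A, z * b ∈ Jm D K (g i)), preMulM D K z (Jm D K (g i))

lemma mem_opF {n : ℕ} {A : Submodule (Polynomial D) (RatFunc K)} {a : RatFunc K} :
    a ∈ opF D K star g n A ↔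
      (∀ z : RatFunc K, z ≠ 0 → ∀ E : Submodule D K, E ≠ ⊥ →
        (∀ b ∈ A, z * b ∈ polyExt D K E) → z * a ∈ polyExt D K (star E)) ∧
      (∀ i : ℕ, n ≤ i → ∀ z : RatFunc K, z ≠ 0 →
        (∀ b ∈ A, z * b ∈ Jm D K (g i)) → z * a ∈ Jm D K (g i)) := by
  simp [opF, Submodule.mem_inf, Submodule.mem_iInf, mem_preMulM]

variable {D K}

lemma opF_mono (hstar : IsSemistarOp D K star) (n : ℕ)
    {A B : Submodule (Polynomial D) (RatFunc K)} (h : A ≤ B) :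
    opF D K star g n A ≤ opF D K star g n B := by
  intro a ha
  rw [mem_opF] at ha ⊢
  exact ⟨fun z hz E hE hc => ha.1 z hz E hE (fun b hb => hc b (h hb)),
    fun i hi z hz hc => ha.2 i hi z hz (fun b hb => hc b (h hb))⟩

lemma le_opF (hstar : IsSemistarOp D K star) (n : ℕ)
    (A : Submodule (Polynomial D) (RatFunc K)) : A ≤ opF D K star g n A := by
  intro a ha
  rw [mem_opF]
  refine ⟨fun z hz E hE hc => ?_, fun i hi z hz hc => hc a ha⟩
  exact polyExt_mono D K (hstar.2.2.1 E hE) (hc a ha)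

lemma star_ne_bot (hstar : IsSemistarOp D K star) {E : Submodule D K} (hE : E ≠ ⊥) :
    star E ≠ ⊥ := by
  intro h
  apply hE
  have := hstar.2.2.1 E hE
  rw [h, le_bot_iff] at this
  exact this

lemma opF_idem (hstar : IsSemistarOp D K star) (n : ℕ)
    (A : Submodule (Polynomial D) (RatFunc K)) :
    opF D K star g n (opF D K star g n A) = opF D K star g n A := by
  refine le_antisymm ?_ (le_opF star g hstar n _)
  intro a ha
  rw [mem_opF] at ha ⊢
  constructor
  · intro z hz E hE hc
    have hcond : ∀ b ∈ opF D K star g n A, z * b ∈ polyExt D K (star E) :=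
      fun b hb => ((mem_opF D K star g).mp hb).1 z hz E hE hc
    have := ha.1 z hz (star E) (star_ne_bot star hstar hE) hcond
    rwa [hstar.2.2.2 E hE] at this
  · intro i hi z hz hc
    exact ha.2 i hi z hz
      (fun b hb => ((mem_opF D K star g).mp hb).2 i hi z hz hc)

lemma psmul_opF_le (hstar : IsSemistarOp D K star) (n : ℕ) (x : RatFunc K) (hx : x ≠ 0)
    (A : Submodule (Polynomial D) (RatFunc K)) :
    x • opF D K star g n A ≤ opF D K star g n (x • A) := by
  intro a ha
  obtain ⟨w, hw, rfl⟩ := Submodule.mem_psmul.mp ha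
  rw [mem_opF] at hw
  rw [smul_eq_mul, mem_opF]
  constructor
  · intro z hz E hE hc
    have hc' : ∀ b ∈ A, (z * x) * b ∈ polyExt D K E := fun b hb => by
      have := hc (x • b) (Submodule.smul_mem_pointwise_smul b x A hb)
      rw [smul_eq_mul] at this
      rwa [mul_assoc]
    have := hw.1 (z * x) (mul_ne_zero hz hx) E hE hc'
    rwa [← mul_assoc]
  · intro i hi z hz hc
    have hc' : ∀ b ∈ A, (z * x) * b ∈ Jm D K (g i) := fun b hb => by
      have := hc (x • b) (Submodule.smul_mem_pointwise_smul b x A hb)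
      rw [smul_eq_mul] at this
      rwa [mul_assoc]
    have := hw.2 i hi (z * x) (mul_ne_zero hz hx) hc'
    rwa [← mul_assoc]

lemma psmul_mono {x : RatFunc K} {M N : Submodule (Polynomial D) (RatFunc K)}
    (h : M ≤ N) : x • M ≤ x • N := by
  intro a ha
  obtain ⟨s, hs, rfl⟩ := Submodule.mem_psmul.mp ha
  exact Submodule.smul_mem_pointwise_smul s x N (h hs)

lemma opF_psmul (hstar : IsSemistarOp D K star) (n : ℕ) (x : RatFunc K) (hx : x ≠ 0)
    (A : Submodule (Polynomial D) (RatFunc K)) :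
    opF D K star g n (x • A) = x • opF D K star g n A := by
  refine le_antisymm ?_ (psmul_opF_le star g hstar n x hx A)
  have h2 := psmul_opF_le star g hstar n x⁻¹ (inv_ne_zero hx) (x • A)
  rw [smul_smul, inv_mul_cancel₀ hx, one_smul] at h2
  calc opF D K star g n (x • A)
      = x • (x⁻¹ • opF D K star g n (x • A)) := by
        rw [smul_smul, mul_inv_cancel₀ hx, one_smul]
    _ ≤ x • opF D K star g n A := psmul_mono h2

lemma opF_semistar (hstar : IsSemistarOp D K star) (n : ℕ) :
    IsSemistarOp (Polynomial D) (RatFunc K) (opF D K star g n) :=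
  ⟨fun x hx A _ => opF_psmul star g hstar n x hx A,
   fun A B _ _ h => opF_mono star g hstar n h,
   fun A _ => le_opF star g hstar n A,
   fun A _ => opF_idem star g hstar n A⟩

/-- The key lemma: if `z · E[X] ⊆ F[X]` then `z · E^⋆[X] ⊆ F^⋆[X]`. -/
lemma key_lemma (hstar : IsSemistarOp D K star) {z : RatFunc K}
    {E F : Submodule D K} (hE : E ≠ ⊥) (hF : F ≠ ⊥)
    (h : ∀ b ∈ polyExt D K E, z * b ∈ polyExt D K F) :
    ∀ b ∈ polyExt D K (star E), z * b ∈ polyExt D K (star F) := by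
  by_cases hz : z = 0
  · intro b _
    rw [hz, zero_mul]
    exact (polyExt D K (star F)).zero_mem
  obtain ⟨e, heE, he0⟩ := (Submodule.ne_bot_iff E).mp hE
  obtain ⟨q, hqF, heq⟩ := h _ (algC_mem_polyExt D K heE)
  have halgCe : algebraMap (Polynomial K) (RatFunc K) (Polynomial.C e) ≠ 0 := by
    rw [Ne, map_eq_zero_iff _ (RatFunc.algebraMap_injective K)]
    simp [he0]
  set w : Polynomial K := Polynomial.C e⁻¹ * q with hw
  have hzw : z = algebraMap (Polynomial K) (RatFunc K) w := by
    apply mul_right_cancel₀ halgCe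
    rw [heq, ← map_mul]
    congr 1
    rw [hw, mul_assoc, mul_comm q, ← mul_assoc, ← Polynomial.C_mul,
      inv_mul_cancel₀ he0, Polynomial.C_1, one_mul]
  have step1 : ∀ m : ℕ, ∀ e' ∈ E, w.coeff m * e' ∈ F := by
    intro m e' he'
    obtain ⟨r, hr, heq2⟩ := h _ (algC_mem_polyExt D K he')
    rw [hzw, ← map_mul] at heq2
    have hwr : w * Polynomial.C e' = r := RatFunc.algebraMap_injective K heq2
    have hm := hr m
    rw [← hwr, Polynomial.coeff_mul_C] at hm
    exact hm
  have step2 : ∀ m : ℕ, ∀ y ∈ star E, w.coeff m * y ∈ star F := by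
    intro m y hy
    by_cases hc : w.coeff m = 0
    · rw [hc, zero_mul]
      exact (star F).zero_mem
    · have hsub : w.coeff m • E ≤ F := by
        intro t ht
        obtain ⟨s, hs, rfl⟩ := Submodule.mem_psmul.mp ht
        rw [smul_eq_mul]
        exact step1 m s hs
      have hne : w.coeff m • E ≠ ⊥ := by
        intro hbot
        have : w.coeff m • e ∈ w.coeff m • E :=
          Submodule.smul_mem_pointwise_smul e _ E heE
        rw [hbot, Submodule.mem_bot, smul_eq_mul] at this
        exact mul_ne_zero hc he0 this
      have h2 : star (w.coeff m • E) ≤ star F := hstar.2.1 _ _ hne hF hsub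
      rw [hstar.1 _ hc E hE] at h2
      have : w.coeff m • y ∈ w.coeff m • star E :=
        Submodule.smul_mem_pointwise_smul y _ (star E) hy
      have := h2 this
      rwa [smul_eq_mul] at this
  rintro b ⟨p, hp, rfl⟩
  refine ⟨w * p, fun m => ?_, by rw [hzw, ← map_mul]⟩
  rw [Polynomial.coeff_mul]
  exact Submodule.sum_mem _ (fun ij _ => step2 ij.1 _ (hp ij.2))

lemma opF_strict (hstar : IsSemistarOp D K star) (n : ℕ)
    {E : Submodule D K} (hE : E ≠ ⊥) :
    opF D K star g n (polyExt D K E) = polyExt D K (star E) := by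
  refine le_antisymm ?_ ?_
  · intro a ha
    have := ((mem_opF D K star g).mp ha).1 1 one_ne_zero E hE
      (fun b hb => by rwa [one_mul])
    rwa [one_mul] at this
  · intro a ha
    rw [mem_opF]
    obtain ⟨e, heE, he0⟩ := (Submodule.ne_bot_iff E).mp hE
    constructor
    · intro z hz F hF hc
      exact key_lemma star hstar hE hF hc a ha
    · intro i hi z hz hc
      obtain ⟨p, hp, rfl⟩ := ha
      obtain ⟨k, hk⟩ := hc _ (algC_mem_polyExt D K heE)
      rw [mem_Kpoly] at hk
      obtain ⟨q, hq⟩ := hk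
      refine ⟨k, ?_⟩
      rw [mem_Kpoly]
      refine ⟨q * (Polynomial.C e⁻¹ * p), ?_⟩
      have h1 : algebraMap (Polynomial K) (RatFunc K) (Polynomial.C e) *
          algebraMap (Polynomial K) (RatFunc K) (Polynomial.C e⁻¹ * p) =
          algebraMap (Polynomial K) (RatFunc K) p := by
        rw [← map_mul]
        congr 1
        rw [← mul_assoc, ← Polynomial.C_mul, mul_inv_cancel₀ he0,
          Polynomial.C_1, one_mul]
      calc (algebraMap (Polynomial K) (RatFunc K) (g i)) ^ k *
            (z * algebraMap (Polynomial K) (RatFunc K) p)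
          = ((algebraMap (Polynomial K) (RatFunc K) (g i)) ^ k *
              (z * algebraMap (Polynomial K) (RatFunc K) (Polynomial.C e))) *
              algebraMap (Polynomial K) (RatFunc K) (Polynomial.C e⁻¹ * p) := by
            rw [← h1]; ring
        _ = algebraMap (Polynomial K) (RatFunc K) (q * (Polynomial.C e⁻¹ * p)) := by
            rw [hq, ← map_mul]

lemma opF_le_opF (n m : ℕ) (h : n ≤ m) (A : Submodule (Polynomial D) (RatFunc K)) :
    opF D K star g n A ≤ opF D K star g m A := by
  intro a ha
  rw [mem_opF] at ha ⊢
  exact ⟨ha.1, fun i hi z hz hc => ha.2 i (le_trans h hi) z hz hc⟩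

end OpFSec

section SepSec

variable (D K : Type*) [CommRing D] [IsDomain D] [Field K] [Algebra D K] [IsFractionRing D K]

def gam (n : ℕ) : RatFunc K := algebraMap (Polynomial K) (RatFunc K) (gseq K n)

lemma gam_ne_zero (n : ℕ) : gam K n ≠ 0 := by
  rw [gam, Ne, map_eq_zero_iff _ (RatFunc.algebraMap_injective K)]
  exact gseq_ne_zero K n

lemma mem_Jm_gam {n : ℕ} {f : RatFunc K} :
    f ∈ Jm D K (gseq K n) ↔ ∃ k : ℕ, gam K n ^ k * f ∈ Kpoly D K := Iff.rfl

lemma one_mem_Jm (n : ℕ) : (1 : RatFunc K) ∈ Jm D K (gseq K n) := by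
  rw [mem_Jm_gam]
  refine ⟨0, ?_⟩
  rw [pow_zero, one_mul, mem_Kpoly]
  exact ⟨1, by simp⟩

lemma Jm_ne_bot (n : ℕ) : Jm D K (gseq K n) ≠ ⊥ :=
  (Submodule.ne_bot_iff _).mpr ⟨1, one_mem_Jm D K n, one_ne_zero⟩

lemma inv_pow_mem_Jm (n k : ℕ) : (gam K n)⁻¹ ^ k ∈ Jm D K (gseq K n) := by
  rw [mem_Jm_gam]
  refine ⟨k, ?_⟩
  rw [← mul_pow, mul_inv_cancel₀ (gam_ne_zero K n), one_pow, mem_Kpoly]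
  exact ⟨1, by simp⟩

lemma deg_contra {p q : Polynomial K} {j : ℕ} (hq : q ≠ 0)
    (h : q = p * gseq K j ^ (q.natDegree + 1)) : False := by
  have hdvd : gseq K j ^ (q.natDegree + 1) ∣ q := Dvd.intro_left p h.symm
  have h1 := Polynomial.natDegree_le_of_dvd hdvd hq
  rw [Polynomial.natDegree_pow] at h1
  have h2 := (gseq_deg K j).1
  nlinarith

lemma no_polybound (n : ℕ) (z : RatFunc K) (hz : z ≠ 0) (E : Submodule D K)
    (hc : ∀ b ∈ Jm D K (gseq K n), z * b ∈ polyExt D K E) : False := by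
  have h1 := hc 1 (one_mem_Jm D K n)
  rw [mul_one] at h1
  obtain ⟨p0, -, hp0⟩ := h1
  have hp0ne : p0 ≠ 0 := by
    rintro rfl
    rw [map_zero] at hp0
    exact hz hp0
  set k : ℕ := p0.natDegree + 1 with hk
  obtain ⟨pk, -, hpk⟩ := hc _ (inv_pow_mem_Jm D K n k)
  have hzz : z = algebraMap (Polynomial K) (RatFunc K) pk * gam K n ^ k := by
    have hcanc : z * (gam K n)⁻¹ ^ k * gam K n ^ k = z := by
      rw [mul_assoc, ← mul_pow, inv_mul_cancel₀ (gam_ne_zero K n), one_pow, mul_one]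
    rw [← hcanc, hpk]
  rw [hp0] at hzz
  have hzz' : algebraMap (Polynomial K) (RatFunc K) p0 =
      algebraMap (Polynomial K) (RatFunc K) (pk * gseq K n ^ k) := by
    rw [map_mul, map_pow]
    exact hzz
  exact deg_contra K hp0ne (RatFunc.algebraMap_injective K hzz')

lemma no_Jbound (n i : ℕ) (hni : n ≠ i) (z : RatFunc K) (hz : z ≠ 0)
    (hc : ∀ b ∈ Jm D K (gseq K n), z * b ∈ Jm D K (gseq K i)) : False := by
  obtain ⟨l, hl⟩ := (mem_Jm_gam D K).mp (by simpa using hc 1 (one_mem_Jm D K n))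
  rw [mem_Kpoly] at hl
  obtain ⟨q, hq⟩ := hl
  have hqne : q ≠ 0 := by
    rintro rfl
    rw [map_zero] at hq
    exact (mul_ne_zero (pow_ne_zero l (gam_ne_zero K i)) hz) hq
  set k : ℕ := q.natDegree + 1 with hk
  obtain ⟨l', hl'⟩ := (mem_Jm_gam D K).mp (hc _ (inv_pow_mem_Jm D K n k))
  rw [mem_Kpoly] at hl'
  obtain ⟨p, hp⟩ := hl'
  have h2 : gam K i ^ l' * z = algebraMap (Polynomial K) (RatFunc K) p * gam K n ^ k := by
    have hcanc : gam K i ^ l' * (z * (gam K n)⁻¹ ^ k) * gam K n ^ k = gam K i ^ l' * z := by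
      rw [mul_assoc, mul_assoc, ← mul_pow, inv_mul_cancel₀ (gam_ne_zero K n), one_pow, mul_one]
    rw [← hcanc, hp]
  have hR : gam K i ^ l' * algebraMap (Polynomial K) (RatFunc K) q =
      algebraMap (Polynomial K) (RatFunc K) p * gam K n ^ k * gam K i ^ l := by
    calc gam K i ^ l' * algebraMap (Polynomial K) (RatFunc K) q
        = gam K i ^ l' * (gam K i ^ l * z) := by rw [hq]
      _ = (gam K i ^ l' * z) * gam K i ^ l := by ring
      _ = _ := by rw [h2]
  have h4 : gseq K i ^ l' * q = p * gseq K n ^ k * gseq K i ^ l := by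
    apply RatFunc.algebraMap_injective K
    rw [map_mul, map_pow, map_mul, map_mul, map_pow, map_pow]
    exact hR
  have hdvd : gseq K n ^ k ∣ gseq K i ^ l' * q :=
    ⟨p * gseq K i ^ l, by rw [h4]; ring⟩
  have hcop : IsCoprime (gseq K n ^ k) (gseq K i ^ l') :=
    (gseq_coprime K hni).pow
  have hdvd2 : gseq K n ^ k ∣ q := hcop.dvd_of_dvd_mul_left hdvd
  have h5 := Polynomial.natDegree_le_of_dvd hdvd2 hqne
  rw [Polynomial.natDegree_pow] at h5
  have h6 := (gseq_deg K n).1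
  nlinarith

lemma inv_gam_not_mem (n m : ℕ) (hnm : n ≠ m) : (gam K m)⁻¹ ∉ Jm D K (gseq K n) := by
  intro hmem
  obtain ⟨k, hk⟩ := (mem_Jm_gam D K).mp hmem
  rw [mem_Kpoly] at hk
  obtain ⟨p, hp⟩ := hk
  have hR : gam K n ^ k = algebraMap (Polynomial K) (RatFunc K) p * gam K m := by
    calc gam K n ^ k = gam K n ^ k * (gam K m)⁻¹ * gam K m := by
          rw [mul_assoc, inv_mul_cancel₀ (gam_ne_zero K m), mul_one]
      _ = _ := by rw [hp]
  have h3 : gseq K n ^ k = p * gseq K m := by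
    apply RatFunc.algebraMap_injective K
    rw [map_pow, map_mul]
    exact hR
  have hdvd : gseq K m ∣ gseq K n ^ k := Dvd.intro_left p h3.symm
  have hcop : IsCoprime (gseq K m) (gseq K n ^ k) :=
    ((gseq_coprime K hnm).symm).pow_right
  exact gseq_not_unit K m (hcop.isUnit_of_dvd' dvd_rfl hdvd)

end SepSec

/- The theorem. -/

theorem exists_strictly_increasing_strict_extensions (D K : Type*) [CommRing D] [IsDomain D] [Field K] [Algebra D K] [IsFractionRing D K]
    (star : Submodule D K → Submodule D K) (hstar : IsSemistarOp D K star) :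
    ∃ f : ℕ → (Submodule (Polynomial D) (RatFunc K) → Submodule (Polynomial D) (RatFunc K)),
      (∀ n, IsSemistarOp (Polynomial D) (RatFunc K) (f n)) ∧
      (∀ n, IsStrictExtensionFun D K star (f n)) ∧
      (∀ n m, n < m →
        (∀ A : Submodule (Polynomial D) (RatFunc K), A ≠ ⊥ → f n A ≤ f m A) ∧
        ∃ A : Submodule (Polynomial D) (RatFunc K), A ≠ ⊥ ∧ f n A ≠ f m A) := by
  classical
  refine ⟨fun n => opF D K star (gseq K) n,
    fun n => opF_semistar star (gseq K) hstar n,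
    fun n E hE => opF_strict star (gseq K) hstar n hE, ?_⟩
  intro n m hnm
  refine ⟨fun A _ => opF_le_opF star (gseq K) n m hnm.le A,
    Jm D K (gseq K n), Jm_ne_bot D K n, ?_⟩
  intro heq
  dsimp only at heq
  have htop : opF D K star (gseq K) m (Jm D K (gseq K n)) = ⊤ := by
    rw [eq_top_iff]
    intro a _
    rw [mem_opF]
    constructor
    · intro z hz E _ hc
      exact (no_polybound D K n z hz E hc).elim
    · intro i hi z hz hc
      exact (no_Jbound D K n i (by omega) z hz hc).elim
  have hle : opF D K star (gseq K) n (Jm D K (gseq K n)) ≤ Jm D K (gseq K n) := by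
    intro a ha
    have := ((mem_opF D K star (gseq K)).mp ha).2 n le_rfl 1 one_ne_zero
      (fun b hb => by rwa [one_mul])
    rwa [one_mul] at this
  rw [heq, htop] at hle
  exact inv_gam_not_mem D K n m (by omega) (hle Submodule.mem_top)
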